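/- Let M be an r × s matrix with entries in {0,1}. Suppose every row and every column of M consists of at most k maximal alternating intervals of consecutive equal entries, and suppose the set C(M) = { a ∈ [r-1] : M(a,j) ≠ M(a+1,j) for some column j } has at most l elements. Then the number of column indices j ∈ [s-1] for which the j-th column of M differs from the (j+1)-th column is at most (k-1)(2l+1). -/

import Mathlib

/-!
Rows `a` and `a + 1` of `M` coincide unless `a ∈ C(M)`, so every row equals the row that starts
its block of consecutive equal rows, and there are at most `|C(M)| + 1` such blocks. Columns `j`
and `j + 1` differ exactly when some row has a break at `j`, and it suffices to look at one row
per block; each row has at most `k - 1` breaks, which gives the bound `(k - 1)(l + 1)`.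
-/

open Set

variable {α β : Type*}

def breaks {n : ℕ} (f : Fin n → α) : Set ℕ :=
  {j | ∃ h : j + 1 < n, f ⟨j, Nat.lt_of_succ_lt h⟩ ≠ f ⟨j + 1, h⟩}

def blockStarts {n : ℕ} (f : Fin n → α) : Set ℕ :=
  insert 0 ((· + 1) '' breaks f)

section Breaks

variable {n : ℕ} (f : Fin n → α)

lemma breaks_subset_Iio : breaks f ⊆ Iio n := by
  rintro j ⟨h, -⟩
  exact Nat.lt_of_succ_lt h

instance : Finite (breaks f) :=
  ((finite_Iio n).subset (breaks_subset_Iio f)).to_subtype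

lemma ncard_blockStarts_le : (blockStarts f).ncard ≤ (breaks f).ncard + 1 :=
  (ncard_insert_le _ _).trans (Nat.add_le_add_right (ncard_image_le (toFinite _)) 1)

lemma exists_blockStarts_eq (m : ℕ) (hm : m < n) :
    ∃ t : Fin n, (t : ℕ) ∈ blockStarts f ∧ f t = f ⟨m, hm⟩ := by
  induction m with
  | zero => exact ⟨⟨0, hm⟩, mem_insert _ _, rfl⟩
  | succ m ih =>
    by_cases hb : m ∈ breaks f
    · exact ⟨⟨m + 1, hm⟩, mem_insert_of_mem _ ⟨m, hb, rfl⟩, rfl⟩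
    · obtain ⟨t, ht, hft⟩ := ih (by omega)
      have hstep : f ⟨m, by omega⟩ = f ⟨m + 1, hm⟩ := by
        by_contra hne
        exact hb ⟨hm, hne⟩
      exact ⟨t, ht, hft.trans hstep⟩

lemma card_range_le_ncard_breaks_add_one : Nat.card (range f) ≤ (breaks f).ncard + 1 := by
  have hrange : range f ⊆ f '' (Fin.val ⁻¹' blockStarts f) := by
    rintro _ ⟨i, rfl⟩
    obtain ⟨t, ht, hft⟩ := exists_blockStarts_eq f i i.isLt
    exact ⟨t, ht, hft⟩
  have hfin : (blockStarts f).Finite := ((toFinite _).image _).insert 0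
  calc Nat.card (range f) = (range f).ncard := Nat.card_coe_set_eq _
    _ ≤ (f '' (Fin.val ⁻¹' blockStarts f)).ncard := ncard_le_ncard hrange
    _ ≤ (Fin.val ⁻¹' blockStarts f).ncard := ncard_image_le
    _ ≤ (blockStarts f).ncard :=
        ncard_le_ncard_of_injOn Fin.val (fun _ ht => ht) Fin.val_injective.injOn hfin
    _ ≤ (breaks f).ncard + 1 := ncard_blockStarts_le f

end Breaks

lemma ncard_iUnion_le_card_mul {ι : Type*} [Finite ι] (s : ι → Set α) {b : ℕ}
    (h : ∀ i, (s i).ncard ≤ b) : (⋃ i, s i).ncard ≤ Nat.card ι * b := by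
  have := Fintype.ofFinite ι
  calc (⋃ i, s i).ncard ≤ ∑ i, (s i).ncard := ncard_iUnion_le_of_fintype s
    _ ≤ ∑ _i : ι, b := Finset.sum_le_sum fun i _ => h i
    _ = Nat.card ι * b := by simp [Nat.card_eq_fintype_card]

lemma breaks_swap_subset {r s : ℕ} (M : Fin r → Fin s → α) :
    breaks (Function.swap M) ⊆ ⋃ v : range M, breaks (v : Fin s → α) := by
  rintro j ⟨h, hne⟩
  obtain ⟨i, hi⟩ := Function.ne_iff.1 hne
  exact mem_iUnion.2 ⟨⟨M i, i, rfl⟩, h, hi⟩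

lemma ncard_breaks_eq_card {n : ℕ} {ι : Type*} (f : Fin n → ι → β) :
    (breaks f).ncard = Nat.card {j : ℕ // ∃ (h : j + 1 < n) (x : ι),
      f ⟨j, Nat.lt_of_succ_lt h⟩ x ≠ f ⟨j + 1, h⟩ x} := by
  rw [← Nat.card_coe_set_eq]
  simp only [breaks, Function.ne_iff]
  rfl

theorem ncard_breaks_swap_le {r s : ℕ} (M : Fin r → Fin s → α) {b : ℕ}
    (hrow : ∀ i, (breaks (M i)).ncard ≤ b) :
    (breaks (Function.swap M)).ncard ≤ ((breaks M).ncard + 1) * b :=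
  calc (breaks (Function.swap M)).ncard
      ≤ (⋃ v : range M, breaks (v : Fin s → α)).ncard :=
        ncard_le_ncard (breaks_swap_subset M)
    _ ≤ Nat.card (range M) * b :=
        ncard_iUnion_le_card_mul _ fun ⟨_, i, hi⟩ => hi ▸ hrow i
    _ ≤ ((breaks M).ncard + 1) * b :=
        Nat.mul_le_mul_right _ (card_range_le_ncard_breaks_add_one M)

theorem stmt_2 (r s k l : ℕ) (M : Fin r → Fin s → Fin 2)
    (hrow : ∀ i : Fin r,
      Nat.card {j : ℕ // ∃ h : j + 1 < s, M i ⟨j, by omega⟩ ≠ M i ⟨j + 1, h⟩} ≤ k - 1)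
    (hC : Nat.card {a : ℕ // ∃ (h : a + 1 < r) (j : Fin s),
        M ⟨a, by omega⟩ j ≠ M ⟨a + 1, h⟩ j} ≤ l) :
    Nat.card {j : ℕ // ∃ (h : j + 1 < s) (i : Fin r),
        M i ⟨j, by omega⟩ ≠ M i ⟨j + 1, h⟩} ≤ (k - 1) * (2 * l + 1) := by
  calc _ = (breaks (Function.swap M)).ncard := (ncard_breaks_eq_card _).symm
    _ ≤ ((breaks M).ncard + 1) * (k - 1) :=
        ncard_breaks_swap_le M fun i => (Nat.card_coe_set_eq _).symm.trans_le (hrow i)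
    _ ≤ (l + 1) * (k - 1) :=
        Nat.mul_le_mul_right _ (Nat.succ_le_succ ((ncard_breaks_eq_card M).trans_le hC))
    _ ≤ (k - 1) * (2 * l + 1) := by rw [Nat.mul_comm]; exact Nat.mul_le_mul_left _ (by omega)
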